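/- arXiv:1804.03679 — 3 statements merged into one kernel-verified Lean document; each statement's English description precedes it below -/
import Mathlib

section
/- For every integer a ≥ 1, 2·p₃(a−3) + p₃(a−1) + 2·p₂,₁(a−2) = ⌊(3/4)a² + (1/3)a + 1/4⌋, where p₃(n) = ⌊n²/12 + n/2 + 1⌋ for n ≥ −2 and p₂,₁(n) = ⌊n²/4 + n + 1⌋ for n ≥ −1, with the convention that these functions are 0 for smaller arguments. -/
/-!
Completing the square, `p₃(n) = ⌊((n + 3)² + 3) / 12⌋` and `p₂,₁(n) = ⌊(n + 2)² / 4⌋`, so both sides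
are integer quotients of integer quadratics in `a`. Replacing `a` by `a + 12` changes every quotient
by an integer polynomial in `a` and the two sides by the same amount, so the identity holds for all
integers `a` once it holds for the twelve residues modulo `12`.
-/

/-- `p₃(n) = ⌊n²/12 + n/2 + 1⌋` for `n ≥ -2`, and `0` for smaller arguments. -/
noncomputable def p3 (n : ℤ) : ℤ :=
  if -2 ≤ n then ⌊((n : ℚ) ^ 2 / 12 + (n : ℚ) / 2 + 1)⌋ else 0

/-- `p₂,₁(n) = ⌊n²/4 + n + 1⌋` for `n ≥ -1`, and `0` for smaller arguments. -/
noncomputable def p21 (n : ℤ) : ℤ :=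
  if -1 ≤ n then ⌊((n : ℚ) ^ 2 / 4 + (n : ℚ) + 1)⌋ else 0

lemma floor_eq_ediv_of_eq_div {q : ℚ} (m : ℤ) (d : ℕ) (h : q = m / d) : ⌊q⌋ = m / d :=
  h ▸ Rat.floor_intCast_div_natCast m d

lemma p3_of_neg_two_le {n : ℤ} (h : -2 ≤ n) : p3 n = ((n + 3) ^ 2 + 3) / 12 := by
  rw [p3, if_pos h, floor_eq_ediv_of_eq_div ((n + 3) ^ 2 + 3) 12 (by push_cast; ring)]
  rfl

lemma p21_of_neg_one_le {n : ℤ} (h : -1 ≤ n) : p21 n = (n + 2) ^ 2 / 4 := by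
  rw [p21, if_pos h, floor_eq_ediv_of_eq_div ((n + 2) ^ 2) 4 (by push_cast; ring)]
  rfl

lemma floor_quadratic_eq_ediv (a : ℤ) :
    ⌊((3 : ℚ) / 4 * (a : ℚ) ^ 2 + (1 : ℚ) / 3 * (a : ℚ) + 1 / 4)⌋ = (9 * a ^ 2 + 4 * a + 3) / 12 :=
  floor_eq_ediv_of_eq_div _ 12 (by push_cast; ring)

lemma two_mul_ediv_add_ediv_add_two_mul_ediv (a : ℤ) :
    2 * ((a ^ 2 + 3) / 12) + ((a + 2) ^ 2 + 3) / 12 + 2 * (a ^ 2 / 4) =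
      (9 * a ^ 2 + 4 * a + 3) / 12 := by
  obtain ⟨q, r, hr₀, hr₁₂, rfl⟩ : ∃ q r, 0 ≤ r ∧ r < 12 ∧ a = 12 * q + r :=
    ⟨a / 12, a % 12, by omega, by omega, by omega⟩
  interval_cases r <;> ring_nf <;> omega

/-- For every integer `a ≥ 1`,
`2·p₃(a-3) + p₃(a-1) + 2·p₂,₁(a-2) = ⌊(3/4)a² + (1/3)a + 1/4⌋`. -/
theorem r3_identity (a : ℤ) (ha : 1 ≤ a) :
    2 * p3 (a - 3) + p3 (a - 1) + 2 * p21 (a - 2) =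
      ⌊((3 : ℚ) / 4 * (a : ℚ) ^ 2 + (1 : ℚ) / 3 * (a : ℚ) + 1 / 4)⌋ := by
  rw [p3_of_neg_two_le (by omega), p3_of_neg_two_le (by omega), p21_of_neg_one_le (by omega),
    floor_quadratic_eq_ediv, ← two_mul_ediv_add_ediv_add_two_mul_ediv a]
  ring_nf
end

section
/- Let G be a finite group acting on a finite set of c boxes. The number of distributions of n identical balls into the c boxes, counted up to the action of G, equals the coefficient of xⁿ in Z_G(1/(1−x), 1/(1−x²), …, 1/(1−x^c)), where Z_G(t₁,…,t_c) = (1/|G|) Σ_{g∈G} t₁^{m₁(g)} ⋯ t_c^{m_c(g)} is the cycle index of the action and m_j(g) is the number of j-cycles of g. -/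
/-!
By Burnside's lemma the number of orbits is the average over `g ∈ G` of the number of
distributions fixed by `g`. A distribution is fixed by `g` exactly when it is constant on the
cycles of `g`, so it amounts to an arbitrary function `f` on the set of cycles, placing
`∑_C |C| f(C)` balls. Counting such `f` by the number of balls gives the generating function
`∏_C 1/(1 - x^|C|) = ∏_j (1/(1 - x^j))^{m_j(g)}`.
-/

open scoped Classical

/-- `cycCount σ j`: the number of cycles of length `j` in the disjoint cycle
decomposition of the permutation `σ` (fixed points count as 1-cycles). -/
noncomputable def cycCount {c : ℕ} (σ : Equiv.Perm (Fin c)) (j : ℕ) : ℕ :=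
  if j = 1 then c - σ.support.card else Multiset.count j σ.cycleType

/-- The geometric series `1/(1 - xʲ) = Σ_k x^{jk}`. -/
noncomputable def geomSeries (j : ℕ) : PowerSeries ℚ :=
  PowerSeries.mk fun k => if j ∣ k then 1 else 0

open Finset PowerSeries

@[simp]
lemma coeff_geomSeries (j k : ℕ) : coeff k (geomSeries j) = if j ∣ k then 1 else 0 :=
  coeff_mk _ _

lemma natCard_weighted_sum_eq_coeff_prod_geomSeries {ι : Type*} [Fintype ι] (w : ι → ℕ)
    (hw : ∀ i, 0 < w i) (n : ℕ) :
    (Nat.card {f : ι → ℕ // ∑ i, w i * f i = n} : ℚ) = coeff n (∏ i, geomSeries (w i)) := by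
  rw [coeff_prod]
  simp only [coeff_geomSeries, prod_boole, mem_univ, forall_const, sum_boole, Nat.cast_inj]
  rw [← Nat.card_eq_finsetCard]
  refine Nat.card_eq_of_bijective
    (fun f => ⟨Finsupp.equivFunOnFinite.symm fun i => w i * f.1 i, ?_⟩) ⟨?_, ?_⟩
  · simpa [mem_finsuppAntidiag] using f.2
  · intro f g h
    ext i
    simpa [(hw i).ne'] using DFunLike.congr_fun (congrArg Subtype.val h) i
  · rintro ⟨l, hl⟩
    simp only [mem_filter, mem_finsuppAntidiag, subset_univ, and_true] at hl
    refine ⟨⟨fun i => l i / w i, ?_⟩, ?_⟩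
    · simpa [Nat.mul_div_cancel' (hl.2 _)] using hl.1
    · ext i
      simp [Nat.mul_div_cancel' (hl.2 i)]

namespace Setoid

variable {α : Type*} [Fintype α] (r : Setoid α)

noncomputable def classCard (o : Quotient r) : ℕ := #{x | Quotient.mk r x = o}

lemma classCard_pos (o : Quotient r) : 0 < r.classCard o :=
  card_pos.2 ⟨o.out, by simp⟩

lemma sum_comp_mk (f : Quotient r → ℕ) : ∑ x, f (Quotient.mk r x) = ∑ o, r.classCard o * f o := by
  rw [← sum_fiberwise univ (Quotient.mk r)]
  refine sum_congr rfl fun o _ => ?_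
  rw [classCard, ← smul_eq_mul, ← sum_const]
  exact sum_congr rfl fun x hx => by rw [(mem_filter.1 hx).2]

lemma natCard_le_ker_sum_eq_coeff (n : ℕ) :
    (Nat.card {ℓ : α → ℕ // r ≤ ker ℓ ∧ ∑ x, ℓ x = n} : ℚ) =
      coeff n (∏ o, geomSeries (r.classCard o)) := by
  rw [← natCard_weighted_sum_eq_coeff_prod_geomSeries _ r.classCard_pos]
  congr 1
  refine Nat.card_congr ((Equiv.subtypeSubtypeEquivSubtypeInter _ _).symm.trans
    ((r.liftEquiv).subtypeEquiv fun ℓ => ?_))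
  rw [← sum_comp_mk]
  rfl

end Setoid

namespace Equiv.Perm

section

variable {α : Type*} [Fintype α] (σ : Perm α)

lemma sameCycle_setoid_le_ker_iff {β : Type*} (ℓ : α → β) :
    SameCycle.setoid σ ≤ Setoid.ker ℓ ↔ ∀ x, ℓ (σ x) = ℓ x := by
  refine ⟨fun h x => h (sameCycle_apply_left.2 .rfl), fun h x y hxy => ?_⟩
  obtain ⟨k, -, rfl⟩ := hxy.exists_pow_eq'
  suffices ∀ k : ℕ, ℓ ((σ ^ k) x) = ℓ x from (this k).symm
  intro k
  induction k with
  | zero => rfl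
  | succ k ih => rw [pow_succ', mul_apply, h, ih]

variable [DecidableEq α]

lemma classCard_sameCycle_mk (x : α) :
    (SameCycle.setoid σ).classCard (Quotient.mk _ x) =
      if σ x = x then 1 else #(σ.cycleOf x).support := by
  rw [Setoid.classCard]
  split_ifs with hx
  · refine card_eq_one.2 ⟨x, ?_⟩
    ext y
    simpa [Quotient.eq] using ⟨fun h => h.eq_of_right hx, fun h => h ▸ SameCycle.rfl⟩
  · congr 1
    ext y
    rw [mem_filter, Quotient.eq, mem_support_cycleOf_iff, mem_support]
    exact ⟨fun h => ⟨SameCycle.symm h.2, hx⟩, fun h => ⟨mem_univ y, SameCycle.symm h.1⟩⟩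

noncomputable def cycleOfClass : Quotient (SameCycle.setoid σ) → Perm α :=
  Quotient.lift σ.cycleOf fun _ _ h => SameCycle.cycleOf_eq h

lemma classCard_sameCycle (o : Quotient (SameCycle.setoid σ)) :
    (SameCycle.setoid σ).classCard o =
      if σ.cycleOfClass o = 1 then 1 else #(σ.cycleOfClass o).support := by
  induction o using Quotient.inductionOn with
  | h x => simp only [classCard_sameCycle_mk, cycleOfClass, Quotient.lift_mk, cycleOf_eq_one_iff]

lemma card_filter_cycleOfClass_eq_one :
    #{o | σ.cycleOfClass o = 1} = Fintype.card α - #σ.support := by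
  rw [← card_compl]
  refine (card_nbij (Quotient.mk _) (fun x hx => ?_) (fun x hx y _ hxy => ?_)
    (fun o ho => ?_)).symm
  · simp only [coe_compl, Set.mem_compl_iff, mem_coe, mem_support, not_not] at hx
    simp only [coe_filter, mem_univ, true_and, Set.mem_ofPred_eq]
    exact (cycleOf_eq_one_iff σ).2 hx
  · simp only [coe_compl, Set.mem_compl_iff, mem_coe, mem_support, not_not] at hx
    exact SameCycle.eq_of_left (Quotient.exact hxy) hx
  · induction o using Quotient.inductionOn with
    | h x =>
      simp only [coe_filter, mem_univ, true_and, Set.mem_ofPred_eq] at ho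
      exact ⟨x, by simpa using (cycleOf_eq_one_iff σ).1 ho, rfl⟩

lemma prod_filter_cycleOfClass_ne_one {M : Type*} [CommMonoid M] (g : Perm α → M) :
    ∏ o with σ.cycleOfClass o ≠ 1, g (σ.cycleOfClass o) = ∏ f ∈ σ.cycleFactorsFinset, g f := by
  refine prod_nbij σ.cycleOfClass (fun o ho => ?_) (fun o ho o' ho' h => ?_) (fun f hf => ?_)
    (fun _ _ => rfl)
  · induction o using Quotient.inductionOn with
    | h x => exact cycleOf_ne_one_iff_mem_cycleFactorsFinset.1 (mem_filter.1 ho).2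
  · induction o, o' using Quotient.inductionOn₂ with
    | h x y =>
      simp only [mem_coe, mem_filter, mem_univ, true_and] at ho ho'
      have hx : x ∈ σ.support := mem_support.2 fun hx => ho ((cycleOf_eq_one_iff σ).2 hx)
      have hy : y ∈ σ.support := mem_support.2 fun hy => ho' ((cycleOf_eq_one_iff σ).2 hy)
      exact Quotient.sound ((sameCycle_iff_cycleOf_eq_of_mem_support hx hy).2 h)
  · obtain ⟨a, ha⟩ := (mem_cycleFactorsFinset_iff.1 hf).1.nonempty_support
    have hfa := cycle_is_cycleOf ha hf
    refine ⟨Quotient.mk _ a, ?_, hfa.symm⟩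
    simp only [mem_coe, mem_filter, mem_univ, true_and]
    change σ.cycleOf a ≠ 1
    exact hfa ▸ (mem_cycleFactorsFinset_iff.1 hf).1.ne_one

lemma prod_classCard_sameCycle {M : Type*} [CommMonoid M] (F : ℕ → M) :
    ∏ o, F ((SameCycle.setoid σ).classCard o) = (σ.partition.parts.map F).prod := by
  rw [← prod_filter_mul_prod_filter_not univ (fun o => σ.cycleOfClass o = 1), parts_partition,
    Multiset.map_add, Multiset.prod_add, mul_comm (Multiset.prod _), Multiset.map_replicate,
    Multiset.prod_replicate, ← card_filter_cycleOfClass_eq_one, ← prod_const,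
    cycleType_def, Multiset.map_map]
  congr 1
  · exact prod_congr rfl fun o ho => by rw [classCard_sameCycle, if_pos (mem_filter.1 ho).2]
  · refine (prod_congr rfl fun o ho => ?_).trans (prod_filter_cycleOfClass_ne_one σ _)
    rw [classCard_sameCycle, if_neg (mem_filter.1 ho).2]
    rfl

end

variable {c : ℕ} (σ : Perm (Fin c))

lemma count_parts_partition {j : ℕ} (hj : 1 ≤ j) : σ.partition.parts.count j = cycCount σ j := by
  rw [parts_partition, Multiset.count_add, Multiset.count_replicate, Fintype.card_fin, cycCount]
  split_ifs with h₁ h₂ h₂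
  · subst h₁
    simp [Multiset.count_eq_zero.2 fun h => (two_le_of_mem_cycleType h).not_gt one_lt_two]
  · omega
  · omega
  · simp

lemma prod_map_parts_partition_geomSeries :
    (σ.partition.parts.map geomSeries).prod = ∏ j ∈ Icc 1 c, geomSeries j ^ cycCount σ j := by
  rw [prod_multiset_map_count]
  have hpos {j : ℕ} (hj : j ∈ σ.partition.parts) : 1 ≤ j := σ.partition.parts_pos hj
  refine prod_subset_one_on_sdiff (fun j hj => ?_) (fun j hj => ?_) (fun j hj => ?_)
  · rw [Multiset.mem_toFinset] at hj
    exact mem_Icc.2 ⟨hpos hj, by simpa using Nat.Partition.le_of_mem_parts hj⟩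
  · obtain ⟨hj, hj'⟩ := mem_sdiff.1 hj
    rw [← count_parts_partition σ (mem_Icc.1 hj).1,
      Multiset.count_eq_zero.2 (Multiset.mem_toFinset.not.1 hj'), pow_zero]
  · rw [count_parts_partition σ (hpos (Multiset.mem_toFinset.1 hj))]

lemma natCard_invariant_sum_eq_coeff (n : ℕ) :
    (Nat.card {ℓ : Fin c → ℕ // (∀ i, ℓ (σ i) = ℓ i) ∧ ∑ i, ℓ i = n} : ℚ) =
      coeff n (∏ j ∈ Icc 1 c, geomSeries j ^ cycCount σ j) := by
  rw [← σ.prod_map_parts_partition_geomSeries, ← σ.prod_classCard_sameCycle,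
    ← Setoid.natCard_le_ker_sum_eq_coeff]
  simp_rw [σ.sameCycle_setoid_le_ker_iff]

end Equiv.Perm

lemma MulAction.natCard_orbitRel_quotient_eq_inv_mul_sum_natCard_fixedBy (G X : Type*) [Group G]
    [Fintype G] [MulAction G X] [Finite X] :
    (Nat.card (orbitRel.Quotient G X) : ℚ) =
      (Fintype.card G : ℚ)⁻¹ * ∑ g : G, (Nat.card (fixedBy X g) : ℚ) := by
  have := Fintype.ofFinite X
  rw [eq_inv_mul_iff_mul_eq₀ (Nat.cast_ne_zero.2 Fintype.card_ne_zero)]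
  simp only [Nat.card_eq_fintype_card]
  exact_mod_cast (mul_comm _ _).trans (sum_card_fixedBy_eq_card_orbits_mul_card_group G X).symm

section Distributions

variable {G α : Type*} [Group G] [MulAction G α] [Fintype α]

instance {M : Type*} [AddCommMonoid M] (m : M) : MulAction G {ℓ : α → M // ∑ i, ℓ i = m} where
  smul g ℓ := ⟨fun i => ℓ.1 (g⁻¹ • i),
    (Fintype.sum_equiv (MulAction.toPerm g⁻¹) _ _ fun _ => rfl).trans ℓ.2⟩
  one_smul ℓ := Subtype.ext <| funext fun i => congrArg ℓ.1 (by rw [inv_one, one_smul])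
  mul_smul g h ℓ := Subtype.ext <| funext fun i => congrArg ℓ.1 (by rw [mul_inv_rev, mul_smul])

instance (n : ℕ) : Finite {ℓ : α → ℕ // ∑ i, ℓ i = n} :=
  Set.Finite.to_subtype <| (piAntidiag univ n).finite_toSet.subset fun ℓ (h : ∑ i, ℓ i = n) => by
    simpa [mem_piAntidiag] using h

variable {M : Type*} [AddCommMonoid M] {m : M}

lemma distribution_smul_apply (g : G) (ℓ : {ℓ : α → M // ∑ i, ℓ i = m}) (i : α) :
    (g • ℓ).1 i = ℓ.1 (g⁻¹ • i) :=
  rfl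

lemma exists_smul_distribution_iff_orbitRel (ℓ ℓ' : {ℓ : α → M // ∑ i, ℓ i = m}) :
    (∃ g : G, ∀ i, ℓ'.1 i = ℓ.1 (g⁻¹ • i)) ↔ MulAction.orbitRel G _ ℓ ℓ' := by
  rw [MulAction.orbitRel_apply, MulAction.mem_orbit_symm, MulAction.mem_orbit_iff]
  simp only [Subtype.ext_iff, funext_iff, distribution_smul_apply, eq_comm]

lemma mem_fixedBy_distribution_iff (g : G) (ℓ : {ℓ : α → M // ∑ i, ℓ i = m}) :
    ℓ ∈ MulAction.fixedBy _ g ↔ ∀ i, ℓ.1 (g • i) = ℓ.1 i := by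
  rw [MulAction.mem_fixedBy, Subtype.ext_iff, funext_iff]
  simp only [distribution_smul_apply]
  exact ⟨fun h i => by simpa using (h (g • i)).symm, fun h i => by simpa using (h (g⁻¹ • i)).symm⟩

lemma natCard_fixedBy_distribution (g : G) :
    Nat.card (MulAction.fixedBy {ℓ : α → M // ∑ i, ℓ i = m} g) =
      Nat.card {ℓ : α → M // (∀ i, ℓ (MulAction.toPerm g i) = ℓ i) ∧ ∑ i, ℓ i = m} :=
  Nat.card_congr <| (Equiv.subtypeEquivRight (mem_fixedBy_distribution_iff g)).trans <|
    (Equiv.subtypeSubtypeEquivSubtypeInter (fun ℓ : α → M => ∑ i, ℓ i = m)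
      (fun ℓ => ∀ i, ℓ (g • i) = ℓ i)).trans <|
      Equiv.subtypeEquivRight fun _ => and_comm

end Distributions

/-- Cycle index theorem for balls into boxes: the number of `G`-orbits of
distributions of `n` identical balls into `c` boxes equals the coefficient of
`xⁿ` in `Z_G(1/(1-x), 1/(1-x²), …, 1/(1-x^c))`. -/
theorem cycle_index_balls (c n : ℕ) (G : Type) [Group G] [Fintype G]
    [MulAction G (Fin c)] :
    (Nat.card (Quot (fun x y : {ℓ : Fin c → ℕ // ∑ i, ℓ i = n} =>
        ∃ g : G, ∀ i : Fin c, y.1 i = x.1 (g⁻¹ • i))) : ℚ) =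
      PowerSeries.coeff (R := ℚ) n
        ((Fintype.card G : ℚ)⁻¹ •
          ∑ g : G, ∏ j ∈ Finset.Icc 1 c,
            geomSeries j ^ cycCount (MulAction.toPerm g : Equiv.Perm (Fin c)) j) := by
  rw [Nat.card_congr (β := MulAction.orbitRel.Quotient G _)
      (Quot.congrRight exists_smul_distribution_iff_orbitRel),
    MulAction.natCard_orbitRel_quotient_eq_inv_mul_sum_natCard_fixedBy, map_smul, map_sum,
    smul_eq_mul]
  congr 1
  refine sum_congr rfl fun g _ => ?_
  rw [natCard_fixedBy_distribution, Equiv.Perm.natCard_invariant_sum_eq_coeff]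
end

section
/- For every fixed c ≥ 1 there exists a constant K such that R(c,a) ≤ K·a^{c−1} for all a ≥ 1. -/
/-!
Up to relabelling the atoms, a rank-3 lattice is determined by how many atoms have each set of
coatoms as their neighbourhood. No neighbourhood is empty, and a neighbourhood with two or more
coatoms belongs to at most one atom, so these counts are fixed by the set of large neighbourhoods
that occur (at most `2 ^ 2 ^ c` choices) together with the counts of `c - 1` of the singletons,
each in `[0, a]`; the last singleton count is then forced by the total `a`.
-/

/-- A graded rank-3 lattice with `c` coatoms and `a` atoms, encoded as the
bipartite adjacency between coatoms and atoms: no isolated vertices, and any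
two distinct vertices in the same class have at most one common neighbor. -/
def Rank3Lat (c a : ℕ) : Type :=
  {E : Fin c → Fin a → Bool //
    (∀ i, ∃ j, E i j) ∧ (∀ j, ∃ i, E i j) ∧
    (∀ j₁ j₂ : Fin a, j₁ ≠ j₂ → ∀ i₁ i₂ : Fin c,
      E i₁ j₁ → E i₁ j₂ → E i₂ j₁ → E i₂ j₂ → i₁ = i₂) ∧
    (∀ i₁ i₂ : Fin c, i₁ ≠ i₂ → ∀ j₁ j₂ : Fin a,
      E i₁ j₁ → E i₂ j₁ → E i₁ j₂ → E i₂ j₂ → j₁ = j₂)}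

/-- Color-preserving isomorphism of such bipartite structures. -/
def Rank3Iso {c a : ℕ} (x y : Rank3Lat c a) : Prop :=
  ∃ σ : Equiv.Perm (Fin c), ∃ τ : Equiv.Perm (Fin a),
    ∀ i j, x.1 i j = y.1 (σ i) (τ j)

/-- `R c a`: the number of unlabeled graded rank-3 lattices with `c` coatoms
and `a` atoms. -/
noncomputable def R (c a : ℕ) : ℕ := Nat.card (Quot (@Rank3Iso c a))

open Finset

theorem Nat.card_quot_le_of_eq_imp_rel {α β : Type*} [Finite β] {r : α → α → Prop}
    (f : α → β) (hf : ∀ x y, f x = f y → r x y) : Nat.card (Quot r) ≤ Nat.card β :=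
  Nat.card_le_card_of_injective (fun q => f q.out) fun q₁ q₂ h => by
    simpa only [Quot.out_eq] using Quot.sound (hf _ _ h)

theorem Fintype.apply_eq_of_sum_eq_of_forall_ne {ι M : Type*} [Fintype ι] [DecidableEq ι]
    [AddCancelCommMonoid M] {f g : ι → M} (i₀ : ι) (hsum : ∑ i, f i = ∑ i, g i)
    (hne : ∀ i ≠ i₀, f i = g i) : f i₀ = g i₀ := by
  have hrest : ∑ i ∈ univ.erase i₀, f i = ∑ i ∈ univ.erase i₀, g i :=
    Finset.sum_congr rfl fun i hi => hne i (ne_of_mem_erase hi)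
  rw [← add_sum_erase _ f (mem_univ i₀), ← add_sum_erase _ g (mem_univ i₀), hrest] at hsum
  exact add_right_cancel hsum

namespace Rank3Lat

variable {c a : ℕ}

def nbr (x : Rank3Lat c a) (j : Fin a) : Finset (Fin c) := {i | x.1 i j}

@[simp]
theorem mem_nbr {x : Rank3Lat c a} {i : Fin c} {j : Fin a} : i ∈ x.nbr j ↔ x.1 i j := by
  simp [nbr]

def nbrCount (x : Rank3Lat c a) (s : Finset (Fin c)) : ℕ := #{j | x.nbr j = s}

theorem sum_nbrCount (x : Rank3Lat c a) : ∑ s, x.nbrCount s = a := by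
  simpa [nbrCount] using
    (card_eq_sum_card_fiberwise (s := univ) (t := univ) fun j _ => mem_univ (x.nbr j)).symm

theorem nbrCount_le (x : Rank3Lat c a) (s : Finset (Fin c)) : x.nbrCount s ≤ a :=
  (single_le_sum (f := x.nbrCount) (fun _ _ => Nat.zero_le _) (mem_univ s)).trans_eq
    x.sum_nbrCount

theorem nbrCount_empty (x : Rank3Lat c a) : x.nbrCount ∅ = 0 := by
  refine card_eq_zero.mpr (filter_eq_empty_iff.mpr fun j _ hj => ?_)
  obtain ⟨i, hi⟩ := x.2.2.1 j
  simpa [hj] using mem_nbr.mpr hi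

theorem nbrCount_le_one (x : Rank3Lat c a) {s : Finset (Fin c)} (hs : 2 ≤ #s) :
    x.nbrCount s ≤ 1 := by
  refine card_le_one.mpr fun j₁ hj₁ j₂ hj₂ => by_contra fun hne => ?_
  obtain ⟨i₁, hi₁, i₂, hi₂, hi⟩ := one_lt_card.mp hs
  simp only [mem_filter, mem_univ, true_and] at hj₁ hj₂
  subst hj₁
  exact hi <| x.2.2.2.1 j₁ j₂ hne i₁ i₂ (mem_nbr.mp hi₁) (mem_nbr.mp (hj₂ ▸ hi₁))
    (mem_nbr.mp hi₂) (mem_nbr.mp (hj₂ ▸ hi₂))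

/-- Matching up the atoms with equal neighbourhoods relabels `x` into `y`. -/
theorem rank3Iso_of_nbrCount_eq {x y : Rank3Lat c a} (h : ∀ s, x.nbrCount s = y.nbrCount s) :
    Rank3Iso x y := by
  let τ : Equiv.Perm (Fin a) := Equiv.ofFiberEquiv (f := x.nbr) (g := y.nbr) fun s =>
    Fintype.equivOfCardEq (by rw [Fintype.card_subtype, Fintype.card_subtype]; exact h s)
  refine ⟨1, τ, fun i j => ?_⟩
  have hτ : y.nbr (τ j) = x.nbr j := Equiv.ofFiberEquiv_map _ j
  rw [Bool.eq_iff_iff, ← mem_nbr, ← mem_nbr, hτ, Equiv.Perm.one_apply]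

def profile {n : ℕ} (x : Rank3Lat (n + 1) a) :
    Finset (Finset (Fin (n + 1))) × (Fin n → Fin (a + 1)) :=
  (({s | 2 ≤ #s ∧ x.nbrCount s = 1} : Finset _),
    fun k => ⟨x.nbrCount {k.castSucc}, Nat.lt_succ_of_le (x.nbrCount_le _)⟩)

theorem nbrCount_eq_of_profile_eq {n : ℕ} {x y : Rank3Lat (n + 1) a}
    (h : x.profile = y.profile) (s : Finset (Fin (n + 1))) : x.nbrCount s = y.nbrCount s := by
  have hne : ∀ s ≠ {Fin.last n}, x.nbrCount s = y.nbrCount s := by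
    intro s hs
    obtain hcard | hcard := Nat.lt_or_ge #s 2
    · interval_cases hs' : #s
      · rw [card_eq_zero.mp hs', nbrCount_empty, nbrCount_empty]
      · obtain ⟨i, rfl⟩ := card_eq_one.mp hs'
        obtain ⟨k, rfl⟩ | rfl := i.eq_castSucc_or_eq_last
        · exact congrArg Fin.val (congrFun (congrArg Prod.snd h) k)
        · exact absurd rfl hs
    · have hmem : s ∈ x.profile.1 ↔ s ∈ y.profile.1 := by rw [h]
      simp only [profile, mem_filter, mem_univ, true_and, hcard] at hmem
      have := x.nbrCount_le_one hcard
      have := y.nbrCount_le_one hcard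
      omega
  by_cases hs : s = {Fin.last n}
  · subst hs
    exact Fintype.apply_eq_of_sum_eq_of_forall_ne (f := x.nbrCount) _
      (x.sum_nbrCount.trans y.sum_nbrCount.symm) hne
  · exact hne s hs

end Rank3Lat

/-- For every fixed `c ≥ 1` there is a constant `K` with `R(c,a) ≤ K·a^(c-1)`
for all `a ≥ 1`. -/
theorem R_degree_bound (c : ℕ) (hc : 1 ≤ c) :
    ∃ K : ℕ, ∀ a : ℕ, 1 ≤ a → R c a ≤ K * a ^ (c - 1) := by
  obtain ⟨n, rfl⟩ : ∃ n, c = n + 1 := ⟨c - 1, by omega⟩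
  refine ⟨2 ^ 2 ^ (n + 1) * 2 ^ n, fun a ha => ?_⟩
  have hprofile : R (n + 1) a ≤ 2 ^ 2 ^ (n + 1) * (a + 1) ^ n := by
    simpa [R, Nat.card_eq_fintype_card, Fintype.card_finset] using
      Nat.card_quot_le_of_eq_imp_rel Rank3Lat.profile fun x y h =>
        Rank3Lat.rank3Iso_of_nbrCount_eq (Rank3Lat.nbrCount_eq_of_profile_eq h)
  calc R (n + 1) a ≤ 2 ^ 2 ^ (n + 1) * (a + 1) ^ n := hprofile
    _ ≤ 2 ^ 2 ^ (n + 1) * (2 * a) ^ n := by gcongr; omega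
    _ = 2 ^ 2 ^ (n + 1) * 2 ^ n * a ^ (n + 1 - 1) := by rw [Nat.add_sub_cancel, mul_pow, mul_assoc]
end
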